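/- The community function C_scomp satisfies Monotonicity: if S ∈ C_scomp(V,Π) and Π' is a profile such that for all s,u ∈ S and v ∈ V, u ≻_{π_s} v implies u ≻_{π'_s} v, then S ∈ C_scomp(V,Π'). -/

import Mathlib

open Finset

variable {α : Type*} [DecidableEq α]

/-- `GroupPrefers r A B`: under ranking `r` (smaller rank = more preferred), the set `A`
is group-preferred to `B`: there is an injection `f` from `B` into `A` such that each
`f b` is strictly preferred to `b`.  (When `|A| = |B|` this is a bijection.) -/
def GroupPrefers (r : α → ℕ) (A B : Finset α) : Prop :=
  ∃ f : α → α, Set.InjOn f ↑B ∧ (∀ b ∈ B, f b ∈ A) ∧ ∀ b ∈ B, r (f b) < r b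

/-- The top-`k` elements of `A` under the ranking `r`. -/
def topk (r : α → ℕ) (k : ℕ) (A : Finset α) : Finset α :=
  A.filter fun a => (A.filter fun b => r b < r a).card < k

/-- `WeakPrefers r A B`: `r` weakly prefers `A` to `B`, i.e. with `k = min(|A|,|B|)`,
the top-`k` elements of `A` are group-preferred to the top-`k` elements of `B`
(and `A` is nonempty whenever `B` is). -/
def WeakPrefers (r : α → ℕ) (A B : Finset α) : Prop :=
  (B.Nonempty → A.Nonempty) ∧
  GroupPrefers r (topk r (min A.card B.card) A) (topk r (min A.card B.card) B)

/-- `P` is a preference profile on `V`: each individual's ranking is a total (strict)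
order on `V`, i.e. injective on `V`. -/
def IsProfile (V : Finset α) (P : α → α → ℕ) : Prop :=
  ∀ u ∈ V, Set.InjOn (P u) ↑V

/-- `S` is self-approving w.r.t. the profile `P` on `V`. -/
def SelfApproving (V : Finset α) (P : α → α → ℕ) (S : Finset α) : Prop :=
  ∀ S' ⊆ V \ S, S'.card = S.card → ∃ s ∈ S, ¬ GroupPrefers (P s) S' S

/-- `S` is group-stable w.r.t. the profile `P` on `V`. -/
def GroupStable (V : Finset α) (P : α → α → ℕ) (S : Finset α) : Prop :=
  ∀ G, G ⊂ S → G.Nonempty → ∀ G' ⊆ V \ S, G'.card = G.card →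
    ∃ s ∈ S \ G, ¬ GroupPrefers (P s) G' G

/-- `S` is strongly group-stable w.r.t. the profile `P` on `V`. -/
def StronglyGroupStable (V : Finset α) (P : α → α → ℕ) (S : Finset α) : Prop :=
  ∀ G, G ⊂ S → G.Nonempty → ∃ s ∈ S \ G, ¬ WeakPrefers (P s) (V \ S) G

/-- `s` ranks itself first (π_s(s) = 1). -/
def RanksSelfFirst (V : Finset α) (P : α → α → ℕ) (s : α) : Prop :=
  ∀ v ∈ V, v ≠ s → P s s < P s v

/-- Membership in `C_scomp`: strongly group-stable, and a singleton `{s}` must rank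
itself first. -/
def CscompMem (V : Finset α) (P : α → α → ℕ) (S : Finset α) : Prop :=
  S ⊆ V ∧ StronglyGroupStable V P S ∧ ∀ s, S = {s} → RanksSelfFirst V P s

/-- A (nonempty) clique of a preference network: every member prefers every member
to every non-member. -/
def IsClique (V : Finset α) (P : α → α → ℕ) (S : Finset α) : Prop :=
  S.Nonempty ∧ S ⊆ V ∧ ∀ u ∈ S, ∀ v ∈ S, ∀ w ∈ V \ S, P u v < P u w

/-- A community function maps each preference network `(V, P)` to a collection of
subsets of `V`. -/
abbrev CommunityFun (α : Type*) := Finset α → (α → α → ℕ) → Set (Finset α)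

/-- Axiom GS: every (nonempty) community is group-stable. -/
def SatisfiesGS (C : CommunityFun α) : Prop :=
  ∀ (V : Finset α) (P : α → α → ℕ), IsProfile V P →
    ∀ S ∈ C V P, S ⊆ V → S.Nonempty → GroupStable V P S

/-- Axiom SGS: every (nonempty) community is strongly group-stable. -/
def SatisfiesSGS (C : CommunityFun α) : Prop :=
  ∀ (V : Finset α) (P : α → α → ℕ), IsProfile V P →
    ∀ S ∈ C V P, S ⊆ V → S.Nonempty → StronglyGroupStable V P S

/-- Axiom SA: every (nonempty) community is self-approving. -/
def SatisfiesSA (C : CommunityFun α) : Prop :=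
  ∀ (V : Finset α) (P : α → α → ℕ), IsProfile V P →
    ∀ S ∈ C V P, S ⊆ V → S.Nonempty → SelfApproving V P S

/-- Axiom SA': every singleton community ranks itself first. -/
def SatisfiesSA' (C : CommunityFun α) : Prop :=
  ∀ (V : Finset α) (P : α → α → ℕ), IsProfile V P →
    ∀ s ∈ V, {s} ∈ C V P → RanksSelfFirst V P s

/-- Axiom Mon (monotonicity). -/
def SatisfiesMon (C : CommunityFun α) : Prop :=
  ∀ (V : Finset α) (P P' : α → α → ℕ), IsProfile V P → IsProfile V P' →
    ∀ S ⊆ V, (∀ s ∈ S, ∀ u ∈ S, ∀ v ∈ V, P s u < P s v → P' s u < P' s v) →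
      S ∈ C V P → S ∈ C V P'

/-- Axiom WC (world community). -/
def SatisfiesWC (C : CommunityFun α) : Prop :=
  ∀ (V : Finset α) (P : α → α → ℕ), IsProfile V P → V ∈ C V P

/-- Axiom A (anonymity). -/
def SatisfiesA (C : CommunityFun α) : Prop :=
  ∀ (V : Finset α) (P P' : α → α → ℕ) (σ : α ≃ α), IsProfile V P → IsProfile V P' →
    (∀ v ∈ V, σ v ∈ V) → (∀ u ∈ V, ∀ v ∈ V, P' (σ u) (σ v) = P u v) →
    ∀ S ⊆ V, (S ∈ C V P ↔ S.image σ ∈ C V P')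

/-- Axiom Emb (embedding). -/
def SatisfiesEmb (C : CommunityFun α) : Prop :=
  ∀ (V V' : Finset α) (P P' : α → α → ℕ), IsProfile V P → IsProfile V' P' → V' ⊆ V →
    (∀ u ∈ V', ∀ v ∈ V', ∀ w ∈ V', (P' u v < P' u w ↔ P u v < P u w)) →
    C V' P' = C V P ∩ {S : Finset α | S ⊆ V'}


/-! For a member `s` of `S`, monotonicity only lifts members of `S` in `s`'s ranking against the
rest of `V`. Hence the top of any `G ⊆ S` is the same under both rankings, and an injection
witnessing that the new ranking weakly prefers `V \ S` to `G` still dominates pointwise under the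
old ranking. It lands in `V \ S` but possibly outside the old top of `V \ S`; replacing images by
unused better elements of `V \ S`, which strictly lowers the total rank, pushes it there. -/

def GroupPrefersVia (r : α → ℕ) (A B : Finset α) (f : α → α) : Prop :=
  Set.InjOn f ↑B ∧ (∀ b ∈ B, f b ∈ A) ∧ ∀ b ∈ B, r (f b) < r b

section Ranking

variable {r r' : α → ℕ} {A B : Finset α} {k : ℕ}

omit [DecidableEq α] in
lemma card_filter_rank_lt_lt_of_lt {a a' : α} (ha : a ∈ A) (h : r a < r a') :
    #(A.filter fun b => r b < r a) < #(A.filter fun b => r b < r a') := by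
  refine Finset.card_lt_card ⟨fun x hx => ?_, fun hsub => ?_⟩
  · simp only [Finset.mem_filter] at hx ⊢
    exact ⟨hx.1, hx.2.trans h⟩
  · simpa using hsub (Finset.mem_filter.2 ⟨ha, h⟩)

omit [DecidableEq α] in
lemma topk_subset : topk r k A ⊆ A := Finset.filter_subset _ _

lemma card_topk_le (hinj : Set.InjOn r ↑A) : #(topk r k A) ≤ k := by
  have key : Set.InjOn (fun a => #(A.filter fun b => r b < r a)) ↑(topk r k A) := by
    intro a ha a' ha' h
    simp only [topk, Finset.coe_filter, Set.mem_ofPred_eq] at ha ha' h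
    by_contra hne
    rcases Ne.lt_or_gt (fun h' => hne (hinj ha.1 ha'.1 h')) with hlt | hlt
    · exact (card_filter_rank_lt_lt_of_lt ha.1 hlt).ne h
    · exact (card_filter_rank_lt_lt_of_lt ha'.1 hlt).ne' h
  simpa using Finset.card_le_card_of_injOn (s := topk r k A) (t := Finset.range k) _
    (fun a ha => Finset.mem_range.2 (Finset.mem_filter.1 ha).2) key

omit [DecidableEq α] in
lemma topk_congr (h : ∀ a ∈ A, ∀ b ∈ A, (r b < r a ↔ r' b < r' a)) :
    topk r k A = topk r' k A := by
  refine Finset.filter_congr fun a ha => ?_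
  rw [Finset.filter_congr fun b hb => h a ha b hb]

omit [DecidableEq α] in
lemma GroupPrefers.mono_left {A' : Finset α} (hA : A ⊆ A') (h : GroupPrefers r A B) :
    GroupPrefers r A' B :=
  let ⟨f, hinj, hmaps, hlt⟩ := h
  ⟨f, hinj, fun b hb => hA (hmaps b hb), hlt⟩

omit [DecidableEq α] in
lemma GroupPrefers.of_rank_imp (h : GroupPrefers r' A B)
    (himp : ∀ a ∈ A, ∀ b ∈ B, r' a < r' b → r a < r b) : GroupPrefers r A B :=
  let ⟨f, hinj, hmaps, hlt⟩ := h
  ⟨f, hinj, hmaps, fun b hb => himp _ (hmaps b hb) b hb (hlt b hb)⟩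

lemma injOn_update_of_notMem_image {f : α → α} {b₀ x : α} (hf : Set.InjOn f ↑B)
    (hx : x ∉ B.image f) : Set.InjOn (Function.update f b₀ x) ↑B := by
  intro a ha a' ha' h
  simp only [Finset.mem_coe] at ha ha'
  by_cases h₁ : a = b₀ <;> by_cases h₂ : a' = b₀
  · rw [h₁, h₂]
  · simp only [h₁, h₂, Function.update_self, ne_eq, not_false_eq_true,
      Function.update_of_ne] at h
    exact absurd (h ▸ Finset.mem_image_of_mem f ha') hx
  · simp only [h₁, h₂, Function.update_self, ne_eq, not_false_eq_true,
      Function.update_of_ne] at h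
    exact absurd (h ▸ Finset.mem_image_of_mem f ha) hx
  · simp only [ne_eq, h₁, not_false_eq_true, Function.update_of_ne, h₂] at h
    exact hf ha ha' h

/-- If `f b₀` is outside the top `k ≥ #B` of `A`, at least `#B` elements of `A` beat it, so one
of them is not yet used by `f` and can replace `f b₀`, lowering the total rank of the image. -/
lemma GroupPrefersVia.exists_sum_rank_lt {f : α → α} (hf : GroupPrefersVia r A B f)
    (hB : #B ≤ k) {b₀ : α} (hb₀ : b₀ ∈ B) (hout : f b₀ ∉ topk r k A) :
    ∃ g, GroupPrefersVia r A B g ∧ ∑ b ∈ B, r (g b) < ∑ b ∈ B, r (f b) := by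
  obtain ⟨hinj, hmaps, hlt⟩ := hf
  set better := A.filter fun x => r x < r (f b₀)
  have hbetter : k ≤ #better := by
    by_contra h
    exact hout (Finset.mem_filter.2 ⟨hmaps b₀ hb₀, not_le.1 h⟩)
  have hused : #((B.image f).erase (f b₀)) < #better := by
    rw [Finset.card_erase_of_mem (Finset.mem_image_of_mem f hb₀),
      Finset.card_image_of_injOn hinj]
    have := Finset.card_pos.2 ⟨b₀, hb₀⟩
    omega
  obtain ⟨x, hx, hxu⟩ := Finset.exists_mem_notMem_of_card_lt_card hused
  obtain ⟨hxA, hxlt⟩ := Finset.mem_filter.1 hx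
  have hxf : x ∉ B.image f := fun h => hxu (Finset.mem_erase.2 ⟨ne_of_apply_ne r hxlt.ne, h⟩)
  refine ⟨Function.update f b₀ x, ⟨injOn_update_of_notMem_image hinj hxf, ?_, ?_⟩, ?_⟩
  · intro b hb
    rcases eq_or_ne b b₀ with rfl | hne
    · simpa using hxA
    · simpa [hne] using hmaps b hb
  · intro b hb
    rcases eq_or_ne b b₀ with rfl | hne
    · simpa using hxlt.trans (hlt b hb)
    · simpa [hne] using hlt b hb
  · simp only [← Function.comp_apply (f := r), Function.comp_update]
    rw [Finset.sum_update_of_mem hb₀, Finset.sum_eq_add_sum_sdiff_singleton_of_mem hb₀]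
    simpa using hxlt

lemma GroupPrefers.topk_left (hB : #B ≤ k) (h : GroupPrefers r A B) :
    GroupPrefers r (topk r k A) B := by
  obtain ⟨f, hf⟩ := h
  induction hn : ∑ b ∈ B, r (f b) using Nat.strong_induction_on generalizing f with
  | _ n ih =>
    by_cases hall : ∀ b ∈ B, f b ∈ topk r k A
    · exact ⟨f, hf.1, hall, hf.2.2⟩
    push Not at hall
    obtain ⟨b₀, hb₀, hout⟩ := hall
    obtain ⟨g, hg, hsum⟩ := GroupPrefersVia.exists_sum_rank_lt hf hB hb₀ hout
    exact ih _ (hn ▸ hsum) g hg rfl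

end Ranking

section Monotonicity

variable {V S : Finset α} {r r' : α → ℕ}

def PreservesLeadOf (V S : Finset α) (r r' : α → ℕ) : Prop :=
  ∀ u ∈ S, ∀ v ∈ V, r u < r v → r' u < r' v

omit [DecidableEq α] in
lemma PreservesLeadOf.rank_lt_of_rank_lt (hr : Set.InjOn r ↑V) (hSV : S ⊆ V)
    (hmono : PreservesLeadOf V S r r') {u b : α} (hu : u ∈ V) (hb : b ∈ S)
    (h : r' u < r' b) : r u < r b := by
  by_contra hnot
  rcases (not_lt.1 hnot).lt_or_eq with hlt | heq
  · exact (hmono b hb u hu hlt).asymm h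
  · exact h.ne (congrArg r' (hr (hSV hb) hu heq).symm)

lemma PreservesLeadOf.weakPrefers_sdiff (hr : Set.InjOn r ↑V) (hSV : S ⊆ V)
    (hmono : PreservesLeadOf V S r r') {G : Finset α} (hGS : G ⊆ S)
    (h : WeakPrefers r' (V \ S) G) : WeakPrefers r (V \ S) G := by
  obtain ⟨hne, hg⟩ := h
  refine ⟨hne, ?_⟩
  have htopG : topk r' (min #(V \ S) #G) G = topk r (min #(V \ S) #G) G :=
    (topk_congr fun a ha b hb => ⟨hmono b (hGS hb) a (hSV (hGS ha)),
      hmono.rank_lt_of_rank_lt hr hSV (hSV (hGS hb)) (hGS ha)⟩).symm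
  rw [htopG] at hg
  refine GroupPrefers.topk_left (card_topk_le (hr.mono (by exact_mod_cast hGS.trans hSV))) ?_
  refine (hg.mono_left topk_subset).of_rank_imp fun a ha b hb => ?_
  exact hmono.rank_lt_of_rank_lt hr hSV (Finset.sdiff_subset ha) (hGS (topk_subset hb))

end Monotonicity

theorem stmt11_general (V : Finset α) (P P' : α → α → ℕ) (S : Finset α)
    (hP : IsProfile V P)
    (hmem : CscompMem V P S)
    (hmono : ∀ s ∈ S, ∀ u ∈ S, ∀ v ∈ V, P s u < P s v → P' s u < P' s v) :
    CscompMem V P' S := by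
  obtain ⟨hSV, hstable, hsingle⟩ := hmem
  refine ⟨hSV, fun G hGS hGne => ?_, fun t ht v hv hvt => ?_⟩
  · obtain ⟨s, hs, hnot⟩ := hstable G hGS hGne
    have hsS := (Finset.mem_sdiff.1 hs).1
    exact ⟨s, hs, fun h => hnot <|
      PreservesLeadOf.weakPrefers_sdiff (hP s (hSV hsS)) hSV (hmono s hsS) hGS.subset h⟩
  · have htS : t ∈ S := ht ▸ Finset.mem_singleton_self t
    exact hmono t htS t htS v hv (hsingle t ht v hv hvt)

/-- `C_scomp` satisfies Monotonicity. -/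
theorem stmt11 (V : Finset α) (P P' : α → α → ℕ) (S : Finset α)
    (hP : IsProfile V P) (hP' : IsProfile V P') (hSV : S ⊆ V)
    (hmem : CscompMem V P S)
    (hmono : ∀ s ∈ S, ∀ u ∈ S, ∀ v ∈ V, P s u < P s v → P' s u < P' s v) :
    CscompMem V P' S :=
  stmt11_general V P P' S hP hmem hmono
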